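/- arXiv:1909.06582 — 6 statements merged into one kernel-verified Lean document; each statement's English description precedes it below -/
import Mathlib

section
/- For n ≥ 2 and 1 ≤ k ≤ n, the complete homogeneous symmetric polynomial evaluated at 0, 1, ..., n-1 equals a Stirling number of the second kind: m_k(0, 1, ..., n-1) = {n+k-1 brace n-1}. -/
/-- Stirling numbers of the second kind. -/
def stirling2 : ℕ → ℕ → ℕ
  | 0, 0 => 1
  | 0, _ + 1 => 0
  | _ + 1, 0 => 0
  | n + 1, k + 1 => (k + 1) * stirling2 n (k + 1) + stirling2 n k

/-- `h_k` evaluated over a finset of naturals. -/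
def P (s : Finset ℕ) (k : ℕ) : ℕ := ∑ μ ∈ s.sym k, μ.1.prod

lemma P_zero (s : Finset ℕ) : P s 0 = 1 := by
  rw [P, Finset.sym_zero, Finset.sum_singleton]; rfl

lemma P_empty (k : ℕ) : P ∅ (k + 1) = 0 := by simp [P]

lemma P_insert (a : ℕ) (s : Finset ℕ) (ha : a ∉ s) (k : ℕ) :
    P (insert a s) (k + 1) = P s (k + 1) + a * P (insert a s) k := by
  classical
  rw [P, ← Finset.sum_filter_add_sum_filter_not ((insert a s).sym (k+1)) (a ∈ ·),
    add_comm (P s (k+1))]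
  congr 1
  · rw [P, Finset.mul_sum]
    refine Finset.sum_bij' (fun μ hμ => μ.erase a (Finset.mem_filter.mp hμ).2)
      (fun μ _ => a ::ₛ μ) ?_ ?_ ?_ ?_ ?_
    · intro μ hμ
      have h := Finset.mem_filter.mp hμ
      rw [Finset.mem_sym_iff] at h ⊢
      intro b hb
      exact h.1 b (Multiset.mem_of_mem_erase hb)
    · intro μ hμ
      rw [Finset.mem_filter]
      constructor
      · rw [Finset.mem_sym_iff] at hμ ⊢
        intro b hb
        rcases Sym.mem_cons.mp hb with h | hb
        · rw [h]; exact Finset.mem_insert_self a s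
        · exact hμ b hb
      · exact Sym.mem_cons_self a μ
    · intro μ hμ
      exact Sym.cons_erase _
    · intro μ hμ
      exact Sym.erase_cons_head μ a
    · intro μ hμ
      conv_lhs => rw [← Sym.cons_erase (Finset.mem_filter.mp hμ).2]
      simp [Sym.cons]
  · apply Finset.sum_congr _ (fun _ _ => rfl)
    ext μ
    simp only [Finset.mem_filter, Finset.mem_sym_iff, Finset.mem_insert]
    constructor
    · rintro ⟨h1, h2⟩ b hb
      rcases h1 b hb with rfl | h
      · exact absurd hb h2
      · exact h
    · intro h
      exact ⟨fun b hb => Or.inr (h b hb), fun hmem => ha (h a hmem)⟩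

lemma stirling2_eq_zero : ∀ n k : ℕ, n < k → stirling2 n k = 0 := by
  intro n
  induction n with
  | zero => rintro (_ | k) h; · omega
            rfl
  | succ n ih =>
    rintro (_ | k) h; · omega
    show (k + 1) * stirling2 n (k + 1) + stirling2 n k = 0
    rw [ih (k + 1) (by omega), ih k (by omega)]; ring

lemma stirling2_self (n : ℕ) : stirling2 n n = 1 := by
  induction n with
  | zero => rfl
  | succ n ih =>
    show (n + 1) * stirling2 n (n + 1) + stirling2 n n = 1
    rw [ih, stirling2_eq_zero n (n + 1) (by omega)]; ring

lemma P_Icc (n k : ℕ) : P (Finset.Icc 1 n) k = stirling2 (n + k) n := by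
  induction k generalizing n with
  | zero => rw [P_zero, Nat.add_zero, stirling2_self]
  | succ k ihk =>
    induction n with
    | zero =>
      rw [show Finset.Icc 1 0 = ∅ by simp, P_empty]
      exact (stirling2_eq_zero 0 (k + 1) (by omega)).symm ▸ rfl
    | succ n ihn =>
      have hins : Finset.Icc 1 (n + 1) = insert (n + 1) (Finset.Icc 1 n) := by
        ext x; simp; omega
      have hnotmem : (n + 1) ∉ Finset.Icc 1 n := by simp
      rw [hins, P_insert _ _ hnotmem, ← hins, ihn, ihk (n + 1)]
      show _ = stirling2 (n + 1 + k + 1) (n + 1)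
      rw [show stirling2 (n + 1 + k + 1) (n + 1)
          = (n + 1) * stirling2 (n + 1 + k) (n + 1) + stirling2 (n + 1 + k) n from rfl,
        show n + (k + 1) = n + 1 + k by omega]
      omega

/-- `m_k(0,1,…,n-1) = {n+k-1 brace n-1}`. -/
theorem stmt2 (n k : ℕ) (hn : 2 ≤ n) (hk1 : 1 ≤ k) (hkn : k ≤ n) :
    ∑ μ : Sym (Fin n) k, (μ.1.map (fun i : Fin n => (i : ℕ))).prod
      = stirling2 (n + k - 1) (n - 1) := by
  classical
  have h1 : ∑ μ : Sym (Fin n) k, (μ.1.map (fun i : Fin n => (i : ℕ))).prod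
      = P (Finset.range n) k := by
    rw [P]
    refine Finset.sum_bij' (fun (μ : Sym (Fin n) k) _ => μ.map Fin.val)
      (fun (μ : Sym ℕ k) _ => μ.map (fun x => (⟨x % n, Nat.mod_lt _ (by omega)⟩ : Fin n)))
      ?_ ?_ ?_ ?_ ?_
    · intro μ _
      rw [Finset.mem_sym_iff]
      intro b hb
      rw [Sym.mem_map] at hb
      obtain ⟨i, _, rfl⟩ := hb
      exact Finset.mem_range.mpr i.isLt
    · intro μ _; exact Finset.mem_univ _
    · intro μ _
      show Sym.map _ (Sym.map _ μ) = μ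
      rw [Sym.map_map]
      refine (Sym.map_congr fun x hx => ?_).trans (Sym.map_id' μ)
      simp [Nat.mod_eq_of_lt x.isLt]
    · intro μ hμ
      show Sym.map _ (Sym.map _ μ) = μ
      rw [Sym.map_map]
      refine (Sym.map_congr fun x hx => ?_).trans (Sym.map_id' μ)
      have := Finset.mem_sym_iff.mp hμ x hx
      simp [Nat.mod_eq_of_lt (Finset.mem_range.mp this)]
    · intro μ _
      rfl
  rw [h1]
  obtain ⟨m, rfl⟩ : ∃ m, n = m + 1 := ⟨n - 1, by omega⟩
  obtain ⟨j, rfl⟩ : ∃ j, k = j + 1 := ⟨k - 1, by omega⟩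
  have h2 : Finset.range (m + 1) = insert 0 (Finset.Icc 1 m) := by
    ext x; simp; omega
  rw [h2, P_insert 0 _ (by simp), zero_mul, add_zero, P_Icc]
  congr 1 <;> omega
end

section
/- For n ≥ 2 and 1 ≤ k ≤ n: m_k(0, 1/n, 2/n, ..., (n-1)/n) = (1/n^k)·{n+k-1 brace n-1}, where {· brace ·} denotes the Stirling numbers of the second kind. -/
/-!
Up to the factor `n⁻ᵏ`, the left-hand side is `h_k(0, 1, …, n - 1) = h_k(1, …, n - 1)`, since every
monomial involving the zero variable vanishes. Splitting off the monomials that contain the largest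
variable gives `h_{k+1}(1, …, m + 1) = h_{k+1}(1, …, m) + (m + 1) h_k(1, …, m + 1)`, which is the
recurrence of the Stirling numbers `S(m + k, m)`.
-/

open Finset

theorem stirling2_eq_stirlingSecond : stirling2 = Nat.stirlingSecond := by
  funext n k
  induction n generalizing k with
  | zero => cases k <;> rfl
  | succ n ih => cases k <;> simp [stirling2, Nat.stirlingSecond_succ_succ, ih]

namespace Finset

variable {α β R : Type*} [DecidableEq α] [CommSemiring R]

/-- `MvPolynomial.hsymm` in the variables indexed by `s`, evaluated at `x`. -/
def completeHomogeneous (s : Finset α) (x : α → R) (k : ℕ) : R :=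
  ∑ μ ∈ s.sym k, (μ.1.map x).prod

theorem completeHomogeneous_zero (s : Finset α) (x : α → R) : s.completeHomogeneous x 0 = 1 := by
  rw [completeHomogeneous, sym_zero, sum_singleton]
  rfl

theorem completeHomogeneous_empty_succ (x : α → R) (k : ℕ) :
    (∅ : Finset α).completeHomogeneous x (k + 1) = 0 := by
  simp [completeHomogeneous]

theorem completeHomogeneous_univ [Fintype α] (x : α → R) (k : ℕ) :
    (univ : Finset α).completeHomogeneous x k = ∑ μ : Sym α k, (μ.1.map x).prod := by
  rw [completeHomogeneous, sym_univ]

theorem completeHomogeneous_map [DecidableEq β] (s : Finset α) (g : α ↪ β) (x : β → R) (k : ℕ) :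
    (s.map g).completeHomogeneous x k = s.completeHomogeneous (x ∘ g) k := by
  simp only [completeHomogeneous, sym_map, sum_map, Function.Embedding.coeFn_mk, Sym.val_eq_coe,
    Sym.coe_map, Multiset.map_map]

theorem completeHomogeneous_const_mul (s : Finset α) (c : R) (x : α → R) (k : ℕ) :
    s.completeHomogeneous (fun a ↦ c * x a) k = c ^ k * s.completeHomogeneous x k := by
  rw [completeHomogeneous, completeHomogeneous, mul_sum]
  refine sum_congr rfl fun μ _ ↦ ?_
  rw [Multiset.prod_map_mul, Multiset.map_const', Multiset.prod_replicate, Sym.val_eq_coe,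
    Sym.card_coe]

variable {s : Finset α} {a : α}

theorem completeHomogeneous_insert_of_eq_zero {x : α → R} (hx : x a = 0) (k : ℕ) :
    (insert a s).completeHomogeneous x k = s.completeHomogeneous x k := by
  refine (sum_subset (sym_mono (subset_insert a s) k) fun μ hμ hμs ↦ ?_).symm
  obtain ⟨b, hb, hbs⟩ : ∃ b ∈ μ, b ∉ s := by simpa [mem_sym_iff] using hμs
  have hba : b = a := (mem_insert.1 (mem_sym_iff.1 hμ b hb)).resolve_right hbs
  exact Multiset.prod_eq_zero (Multiset.mem_map.2 ⟨a, hba ▸ hb, hx⟩)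

theorem completeHomogeneous_insert_succ (ha : a ∉ s) (x : α → R) (k : ℕ) :
    (insert a s).completeHomogeneous x (k + 1)
      = s.completeHomogeneous x (k + 1) + x a * (insert a s).completeHomogeneous x k := by
  have hwithout : {μ ∈ (insert a s).sym (k + 1) | a ∉ μ} = s.sym (k + 1) := by
    ext μ
    simp only [mem_filter, mem_sym_iff, mem_insert]
    refine ⟨fun ⟨hμ, haμ⟩ b hb ↦ (hμ b hb).resolve_left ?_, fun hμ ↦ ⟨fun b hb ↦ .inr (hμ b hb),
      fun haμ ↦ ha (hμ a haμ)⟩⟩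
    rintro rfl
    exact haμ hb
  have hwith :
      {μ ∈ (insert a s).sym (k + 1) | a ∈ μ} = ((insert a s).sym k).image (Sym.cons a) := by
    ext μ
    simp only [mem_filter, mem_image, mem_sym_iff]
    constructor
    · rintro ⟨hμ, haμ⟩
      refine ⟨μ.erase a haμ, fun b hb ↦ hμ b ?_, Sym.cons_erase haμ⟩
      rw [← Sym.mem_coe, Sym.coe_erase] at hb
      exact Multiset.mem_of_mem_erase hb
    · rintro ⟨ν, hν, rfl⟩
      refine ⟨fun b hb ↦ ?_, Sym.mem_cons_self a ν⟩
      rcases Sym.mem_cons.1 hb with rfl | hb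
      exacts [mem_insert_self b s, hν b hb]
  rw [completeHomogeneous, ← sum_filter_not_add_sum_filter _ (a ∈ ·), hwithout, hwith,
    sum_image fun μ _ ν _ ↦ (Sym.cons_inj_right a μ ν).1, completeHomogeneous,
    completeHomogeneous, mul_sum]
  simp [Sym.coe_cons]

theorem completeHomogeneous_range_natCast_succ (m k : ℕ) :
    (range m).completeHomogeneous (fun i ↦ ((i + 1 : ℕ) : R)) k
      = Nat.stirlingSecond (m + k) m := by
  induction m generalizing k with
  | zero => cases k <;> simp [completeHomogeneous_zero, completeHomogeneous_empty_succ]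
  | succ m ihm =>
    induction k with
    | zero => simp [completeHomogeneous_zero, Nat.stirlingSecond_self]
    | succ k ihk =>
      rw [range_add_one, completeHomogeneous_insert_succ notMem_range_self, ← range_add_one, ihm,
        ihk, show m + 1 + (k + 1) = m + 1 + k + 1 by omega, Nat.stirlingSecond_succ_succ,
        show m + (k + 1) = m + 1 + k by omega]
      push_cast
      ring

theorem completeHomogeneous_range_natCast (m k : ℕ) :
    (range (m + 1)).completeHomogeneous (fun i ↦ (i : R)) k
      = Nat.stirlingSecond (m + k) m := by
  rw [range_add_one', completeHomogeneous_insert_of_eq_zero Nat.cast_zero, completeHomogeneous_map]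
  exact completeHomogeneous_range_natCast_succ m k

end Finset

theorem stmt4_general (n k : ℕ) (hn : 2 ≤ n) :
    ∑ μ : Sym (Fin n) k, (μ.1.map (fun i : Fin n => (i : ℚ) / n)).prod
      = (stirling2 (n + k - 1) (n - 1) : ℚ) / n ^ k := by
  obtain ⟨m, rfl⟩ : ∃ m, n = m + 1 := ⟨n - 1, by omega⟩
  calc _ = (range (m + 1)).completeHomogeneous (fun i : ℕ ↦ ((m + 1 : ℕ) : ℚ)⁻¹ * i) k := by
        rw [← Nat.Iio_eq_range, ← Fin.map_valEmbedding_univ, completeHomogeneous_map,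
          completeHomogeneous_univ]
        simp only [Function.comp_def, Fin.valEmbedding_apply, div_eq_inv_mul]
    _ = ((m + 1 : ℕ) : ℚ)⁻¹ ^ k * Nat.stirlingSecond (m + k) m := by
        rw [completeHomogeneous_const_mul, completeHomogeneous_range_natCast]
    _ = _ := by
        rw [stirling2_eq_stirlingSecond, show m + 1 + k - 1 = m + k by omega, Nat.add_sub_cancel,
          inv_pow, inv_mul_eq_div]

/-- `m_k(0, 1/n, …, (n-1)/n) = {n+k-1 brace n-1} / n^k`. -/
theorem stmt4 (n k : ℕ) (hn : 2 ≤ n) (hk1 : 1 ≤ k) (hkn : k ≤ n) :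
    ∑ μ : Sym (Fin n) k, (μ.1.map (fun i : Fin n => (i : ℚ) / n)).prod
      = (stirling2 (n + k - 1) (n - 1) : ℚ) / n ^ k :=
  stmt4_general n k hn
end

section
/- The triple (s₁(Z), s₂(Z), s₁(Z)) of elementary symmetric polynomials in three variables Z = (Z₁, Z₂, Z₃) satisfies both Markov-type equations: aa* + bb* + cc* − a b* c = 3 − (Z₁³+Z₂³+Z₃³)/(Z₁Z₂Z₃) and aa* + bb* + cc* − a* b c* = 3 − (Z₂³Z₃³+Z₁³Z₃³+Z₁³Z₂³)/(Z₁²Z₂²Z₃²), where f* denotes the substitution Zᵢ ↦ Zᵢ^{-1}. -/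
/-- The ring of integer Laurent polynomials in three variables
`ℤ[Z₁^{±1}, Z₂^{±1}, Z₃^{±1}]`, realized as the group algebra of `Fin 3 → ℤ` over `ℤ`. -/
abbrev Laurent3 : Type := AddMonoidAlgebra ℤ (Fin 3 → ℤ)

/-- The involution `f ↦ f*` inverting each variable. -/
noncomputable def invol3 (f : Laurent3) : Laurent3 :=
  AddMonoidAlgebra.mapDomain (fun v : Fin 3 → ℤ => -v) f

/-- The variable `Z_i`. -/
noncomputable def Zv (i : Fin 3) : Laurent3 :=
  AddMonoidAlgebra.single (Pi.single i (1 : ℤ)) 1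

/-!
With `a = Z₁ + Z₂ + Z₃`, `b = s₂(Z)` and `e = Z₁Z₂Z₃` one has `b = e a*` and `b* = e* a`, so the
left-hand side of the first equation is `3 a a* - e* a³`. Newton's identity
`a³ = p₃ + 3ab - 3e` with `p₃ = Z₁³ + Z₂³ + Z₃³` turns `e* a³` into `e* p₃ + 3 a a* - 3`. The second
equation is the first one for the inverted variables. Only `Zᵢ Zᵢ* = 1` is used, so the identities
hold in any commutative ring.
-/

section CommRing

variable {R : Type*} [CommRing R] {x y z x' y' z' : R}

theorem markov_identity_esymm (hx : x * x' = 1) (hy : y * y' = 1) (hz : z * z' = 1) :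
    (x + y + z) * (x' + y' + z') + (x * y + x * z + y * z) * (x' * y' + x' * z' + y' * z') +
        (x + y + z) * (x' + y' + z') - (x + y + z) * (x' * y' + x' * z' + y' * z') * (x + y + z)
      = 3 - (x ^ 3 + y ^ 3 + z ^ 3) * (x' * y' * z') := by
  have he : x * y * z * (x' * y' * z') = 1 := by
    linear_combination y * y' * z * z' * hx + z * z' * hy + hz
  have hb : x * y + x * z + y * z = x * y * z * (x' + y' + z') := by
    linear_combination -(y * z) * hx - x * z * hy - x * y * hz
  have hb' : x' * y' + x' * z' + y' * z' = x' * y' * z' * (x + y + z) := by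
    linear_combination -(y' * z') * hx - x' * z' * hy - x' * y' * hz
  have newton : (x + y + z) ^ 3
      = x ^ 3 + y ^ 3 + z ^ 3 + 3 * (x + y + z) * (x * y + x * z + y * z) - 3 * (x * y * z) := by
    ring
  rw [hb']
  linear_combination (3 - 2 * (x + y + z) * (x' + y' + z')) * he - x' * y' * z' * newton
    - 2 * (x' * y' * z') * (x + y + z) * hb

theorem pow_three_mul_prod_eq (hx : x * x' = 1) (hy : y * y' = 1) (hz : z * z' = 1) :
    x' ^ 3 * (x * y * z) = y ^ 3 * z ^ 3 * (x' * y' * z') ^ 2 := by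
  linear_combination
    x' ^ 2 * y * z * hx - x' ^ 2 * y * z * (y * y' * z * z' + 1) * (z * z' * hy + hz)

end CommRing

noncomputable def invol3RingHom : Laurent3 →+* Laurent3 :=
  AddMonoidAlgebra.mapDomainRingHom ℤ (negAddMonoidHom : (Fin 3 → ℤ) →+ (Fin 3 → ℤ))

theorem invol3_add (f g : Laurent3) : invol3 (f + g) = invol3 f + invol3 g :=
  map_add invol3RingHom f g

theorem invol3_mul (f g : Laurent3) : invol3 (f * g) = invol3 f * invol3 g :=
  map_mul invol3RingHom f g

theorem invol3_Zv (i : Fin 3) :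
    invol3 (Zv i) = AddMonoidAlgebra.single (-Pi.single i 1) 1 :=
  AddMonoidAlgebra.mapDomain_single

theorem Zv_mul_invol3_Zv (i : Fin 3) : Zv i * invol3 (Zv i) = 1 := by
  rw [invol3_Zv, Zv, AddMonoidAlgebra.single_mul_single, add_neg_cancel, one_mul]
  rfl

theorem single_neg_eq_prod_invol3_Zv_pow (n : ℕ) :
    (AddMonoidAlgebra.single (fun _ : Fin 3 => -(n : ℤ)) 1 : Laurent3)
      = (invol3 (Zv 0) * invol3 (Zv 1) * invol3 (Zv 2)) ^ n := by
  simp only [invol3_Zv, AddMonoidAlgebra.single_mul_single, AddMonoidAlgebra.single_pow, one_pow,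
    mul_one]
  congr 1
  funext i
  fin_cases i <;> simp

/-- the triple `(a,b,c) = (s₁(Z), s₂(Z), s₁(Z))` satisfies both
Markov-type equations
`aa* + bb* + cc* − a b* c = 3 − (Z₁³+Z₂³+Z₃³)/(Z₁Z₂Z₃)` and
`aa* + bb* + cc* − a* b c* = 3 − (Z₂³Z₃³+Z₁³Z₃³+Z₁³Z₂³)/(Z₁²Z₂²Z₃²)`. -/
theorem stmt10 :
    (let a : Laurent3 := Zv 0 + Zv 1 + Zv 2
     let b : Laurent3 := Zv 0 * Zv 1 + Zv 0 * Zv 2 + Zv 1 * Zv 2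
     let c : Laurent3 := Zv 0 + Zv 1 + Zv 2
     a * invol3 a + b * invol3 b + c * invol3 c - a * invol3 b * c
        = 3 - (Zv 0 ^ 3 + Zv 1 ^ 3 + Zv 2 ^ 3) *
            AddMonoidAlgebra.single (fun _ : Fin 3 => (-1 : ℤ)) 1 ∧
     a * invol3 a + b * invol3 b + c * invol3 c - invol3 a * b * invol3 c
        = 3 - (Zv 1 ^ 3 * Zv 2 ^ 3 + Zv 0 ^ 3 * Zv 2 ^ 3 + Zv 0 ^ 3 * Zv 1 ^ 3) *
            AddMonoidAlgebra.single (fun _ : Fin 3 => (-2 : ℤ)) 1) := by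
  intro a b c
  have hx := Zv_mul_invol3_Zv 0
  have hy := Zv_mul_invol3_Zv 1
  have hz := Zv_mul_invol3_Zv 2
  have hx' := (mul_comm _ _).trans hx
  have hy' := (mul_comm _ _).trans hy
  have hz' := (mul_comm _ _).trans hz
  have h1 := single_neg_eq_prod_invol3_Zv_pow 1
  have h2 := single_neg_eq_prod_invol3_Zv_pow 2
  push_cast at h1 h2
  simp only [a, b, c, invol3_add, invol3_mul, h1, h2, pow_one]
  constructor
  · exact markov_identity_esymm hx hy hz
  · linear_combination markov_identity_esymm hx' hy' hz' - pow_three_mul_prod_eq hx hy hz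
      - pow_three_mul_prod_eq hy hx hz - pow_three_mul_prod_eq hz hx hy
end

section
/- In the braid group B_n with generators τ₁,...,τ_{n-1}, define for n odd: δ_odd = τ₁τ₃···τ_{n-2}, δ_even = τ₂τ₄···τ_{n-1}; and for n even: δ_odd = τ₁τ₃···τ_{n-1}, δ_even = τ₂τ₄···τ_{n-2}. Then the alternating product of n factors σ_odd := δ_odd·δ_even·δ_odd·δ_even··· (n factors) equals the half-twist braid β := τ₁(τ₂τ₁)···(τ_{n-2}···τ₁)(τ_{n-1}τ_{n-2}···τ₁). -/
namespace Stmt11Aux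

variable {G : Type*} [Group G]

/-- product of generators along a list of indices -/
def P (τ : ℕ → G) (l : List ℕ) : G := (l.map τ).prod

/-- descending chain `[a+k-1, a+k-2, …, a]` -/
def chainL : ℕ → ℕ → List ℕ
  | _, 0 => []
  | a, k+1 => (a+k) :: chainL a k

/-- ascending arithmetic progression with step 2: `[a, a+2, …, a+2(k-1)]` -/
def sparse : ℕ → ℕ → List ℕ
  | _, 0 => []
  | a, k+1 => a :: sparse (a+2) k

/-- alternating concatenation of `f` factors `x, y, x, y, …` -/
def zig (x y : List ℕ) : ℕ → List ℕ
  | 0 => []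
  | f+1 => x ++ zig y x f

/-- alternating product of `f` factors -/
def prodAlt (a b : G) : ℕ → G
  | 0 => 1
  | n+1 => a * prodAlt b a n

/-- the half twist -/
def betaP (τ : ℕ → G) : ℕ → G
  | 0 => 1
  | k+1 => betaP τ k * P τ (chainL 1 (k+1))

@[simp] lemma P_nil (τ : ℕ → G) : P τ [] = 1 := rfl

@[simp] lemma P_cons (τ : ℕ → G) (x : ℕ) (l : List ℕ) :
    P τ (x :: l) = τ x * P τ l := by simp [P]

@[simp] lemma P_append (τ : ℕ → G) (l l' : List ℕ) :
    P τ (l ++ l') = P τ l * P τ l' := by simp [P]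

@[simp] lemma P_singleton (τ : ℕ → G) (x : ℕ) : P τ [x] = τ x := by simp [P]

lemma chainL_snoc (a k : ℕ) : chainL (a+1) k ++ [a] = chainL a (k+1) := by
  induction k with
  | zero => simp [chainL]
  | succ k ih =>
      rw [chainL, chainL, List.cons_append, ih]
      ring_nf

lemma mem_chainL {a k x : ℕ} (hx : x ∈ chainL a k) : a ≤ x ∧ x < a + k := by
  induction k with
  | zero => simp [chainL] at hx
  | succ k ih =>
      rw [chainL] at hx
      rcases List.mem_cons.1 hx with h | h
      · omega
      · have := ih h; omega

lemma sparse_append (a j k : ℕ) : sparse a (j + k) = sparse a j ++ sparse (a + 2*j) k := by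
  induction j generalizing a with
  | zero => simp [sparse]
  | succ j ih =>
      have : j + 1 + k = (j + k) + 1 := by omega
      rw [this, sparse, sparse, ih, List.cons_append]
      have h2 : a + 2 + 2*j = a + 2*(j+1) := by omega
      rw [h2]

lemma sparse_snoc (a k : ℕ) : sparse a (k + 1) = sparse a k ++ [a + 2*k] := by
  rw [sparse_append a k 1]; rfl

lemma mem_sparse {a k x : ℕ} (hx : x ∈ sparse a k) : a ≤ x ∧ x + 2 ≤ a + 2*k := by
  induction k generalizing a with
  | zero => simp [sparse] at hx
  | succ k ih =>
      rw [sparse] at hx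
      rcases List.mem_cons.1 hx with h | h
      · omega
      · have := ih h; omega

lemma sparse_map_succ (a k : ℕ) : (sparse a k).map (· + 1) = sparse (a+1) k := by
  induction k generalizing a with
  | zero => simp [sparse]
  | succ k ih => rw [sparse, sparse, List.map_cons, ih]

lemma zig_two_step (x y : List ℕ) (f : ℕ) : zig x y (f + 2) = x ++ y ++ zig x y f := by
  rw [zig, zig, List.append_assoc]


section Rel

variable {G : Type*} [Group G] {τ : ℕ → G} {M : ℕ}

/-- a single far-away generator commutes with a product -/
lemma comm_list (hc : ∀ i j, 1 ≤ i → j ≤ M → i + 1 < j → τ i * τ j = τ j * τ i)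
    (x : ℕ) (hx1 : 1 ≤ x) (hxM : x ≤ M) :
    ∀ l : List ℕ, (∀ y ∈ l, 1 ≤ y ∧ y ≤ M ∧ (x + 1 < y ∨ y + 1 < x)) →
      τ x * P τ l = P τ l * τ x := by
  intro l
  induction l with
  | nil => simp
  | cons z l ih =>
      intro h
      have hz := h z (by simp)
      have hcomm : τ x * τ z = τ z * τ x := by
        rcases hz.2.2 with hlt | hgt
        · exact hc x z hx1 hz.2.1 hlt
        · exact (hc z x hz.1 hxM hgt).symm
      have ih' := ih (fun y hy => h y (List.mem_cons_of_mem _ hy))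
      rw [P_cons, ← mul_assoc, hcomm, mul_assoc, ih', ← mul_assoc]

/-- two far-apart blocks commute -/
lemma comm_block (hc : ∀ i j, 1 ≤ i → j ≤ M → i + 1 < j → τ i * τ j = τ j * τ i) :
    ∀ (l l' : List ℕ), (∀ x ∈ l, 1 ≤ x ∧ x ≤ M) → (∀ y ∈ l', 1 ≤ y ∧ y ≤ M) →
      (∀ x ∈ l, ∀ y ∈ l', x + 1 < y ∨ y + 1 < x) →
      P τ l * P τ l' = P τ l' * P τ l := by
  intro l
  induction l with
  | nil => simp
  | cons z l ih =>
      intro l' hl hl' hfar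
      have hz := hl z (by simp)
      have h1 : τ z * P τ l' = P τ l' * τ z := by
        refine comm_list hc z hz.1 hz.2 l' (fun y hy => ?_)
        exact ⟨(hl' y hy).1, (hl' y hy).2, hfar z (by simp) y hy⟩
      have h2 := ih l' (fun x hx => hl x (List.mem_cons_of_mem _ hx)) hl'
        (fun x hx y hy => hfar x (List.mem_cons_of_mem _ hx) y hy)
      rw [P_cons, mul_assoc, h2, ← mul_assoc, h1, mul_assoc]

/-- the shift rule: a chain moves a generator strictly inside it down by one -/
lemma chain_shift (hb : ∀ i, 1 ≤ i → i + 1 ≤ M → τ i * τ (i + 1) * τ i = τ (i + 1) * τ i * τ (i + 1))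
    (hc : ∀ i j, 1 ≤ i → j ≤ M → i + 1 < j → τ i * τ j = τ j * τ i)
    (a : ℕ) (ha : 1 ≤ a) :
    ∀ (k i : ℕ), a ≤ i → i + 2 ≤ a + k → a + k ≤ M + 1 →
      P τ (chainL a k) * τ (i+1) = τ i * P τ (chainL a k) := by
  intro k
  induction k with
  | zero => intro i h1 h2 h3; exfalso; omega
  | succ k ih =>
      intro i h1 h2 h3
      rcases Nat.lt_or_ge (i+2) (a+(k+1)) with hlt | hge
      · -- i strictly inside the smaller chain
        have hik : i + 1 < a + k := by omega
        rw [chainL, P_cons, mul_assoc, ih i h1 (by omega) (by omega), ← mul_assoc,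
          ← hc i (a+k) (by omega) (by omega) hik, mul_assoc]
      · -- i + 2 = a + (k+1) : top case
        have hk1 : 1 ≤ k := by omega
        obtain ⟨k', rfl⟩ : ∃ k', k = k' + 1 := ⟨k - 1, by omega⟩
        have hI : i = a + k' := by omega
        subst hI
        have hcc : P τ (chainL a k') * τ (a + k' + 1) = τ (a + k' + 1) * P τ (chainL a k') := by
          rcases Nat.eq_zero_or_pos k' with rfl | h0
          · simp [chainL]
          refine (comm_list hc (a + k' + 1) (by omega) (by omega) _ (fun y hy => ?_)).symm
          have := mem_chainL hy
          exact ⟨by omega, by omega, Or.inr (by omega)⟩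
        have hbr := (hb (a + k') (by omega) (by omega)).symm
        have e1 : a + (k' + 1) = a + k' + 1 := by omega
        rw [chainL, chainL, P_cons, P_cons, e1]
        calc τ (a + k' + 1) * (τ (a + k') * P τ (chainL a k')) * τ (a + k' + 1)
            = τ (a + k' + 1) * τ (a + k') * (P τ (chainL a k') * τ (a + k' + 1)) := by
              rw [mul_assoc, mul_assoc, mul_assoc]
          _ = τ (a + k' + 1) * τ (a + k') * τ (a + k' + 1) * P τ (chainL a k') := by
              rw [hcc]; simp [mul_assoc]
          _ = τ (a + k') * (τ (a + k' + 1) * (τ (a + k') * P τ (chainL a k'))) := by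
              rw [hbr]; simp [mul_assoc]

end Rel




section Rel2

variable {G : Type*} [Group G] {τ : ℕ → G} {M : ℕ}

lemma chain_absorb (τ : ℕ → G) (a k : ℕ) :
    P τ (chainL (a+1) k) * τ a = P τ (chainL a (k+1)) := by
  rw [← chainL_snoc, P_append, P_singleton]

/-- a block of letters lying at least two below the bottom of a chain commutes with it -/
lemma chain_comm_block (hc : ∀ i j, 1 ≤ i → j ≤ M → i + 1 < j → τ i * τ j = τ j * τ i)
    (a k : ℕ) (ha : 1 ≤ a) (hak : a + k ≤ M + 1) (l : List ℕ)
    (hl : ∀ y ∈ l, 1 ≤ y ∧ y + 2 ≤ a) :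
    P τ (chainL a k) * P τ l = P τ l * P τ (chainL a k) := by
  refine comm_block hc _ _ (fun x hx => ?_) (fun y hy => ?_) (fun x hx y hy => ?_)
  · have := mem_chainL hx; constructor <;> omega
  · have := hl y hy
    rcases List.eq_nil_or_concat (chainL a k) with h | ⟨l₂, z, h⟩
    · constructor <;> omega
    · have hz : z ∈ chainL a k := by rw [h]; simp
      have := mem_chainL hz
      constructor <;> omega
  · have h1 := mem_chainL hx
    have h2 := hl y hy
    right; omega

/-- shifting a whole block down through a chain -/
lemma chain_shift_list (hb : ∀ i, 1 ≤ i → i + 1 ≤ M → τ i * τ (i + 1) * τ i = τ (i + 1) * τ i * τ (i + 1))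
    (hc : ∀ i j, 1 ≤ i → j ≤ M → i + 1 < j → τ i * τ j = τ j * τ i)
    (a k : ℕ) (ha : 1 ≤ a) (hak : a + k ≤ M + 1) :
    ∀ l : List ℕ, (∀ x ∈ l, a ≤ x ∧ x + 2 ≤ a + k) →
      P τ (chainL a k) * P τ (l.map (· + 1)) = P τ l * P τ (chainL a k) := by
  intro l
  induction l with
  | nil => simp
  | cons z l ih =>
      intro h
      have hz := h z (by simp)
      have ih' := ih (fun y hy => h y (List.mem_cons_of_mem _ hy))
      rw [List.map_cons, P_cons, P_cons, ← mul_assoc,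
        chain_shift hb hc a ha k z hz.1 hz.2 hak, mul_assoc, ih', ← mul_assoc]

end Rel2


@[simp] lemma zig_zero (x y : List ℕ) : zig x y 0 = [] := rfl
@[simp] lemma zig_succ (x y : List ℕ) (f : ℕ) : zig x y (f+1) = x ++ zig y x f := rfl
lemma sparse_succ (a k : ℕ) : sparse a (k+1) = a :: sparse (a+2) k := rfl
lemma chainL_succ (a k : ℕ) : chainL a (k+1) = (a+k) :: chainL a k := rfl
lemma chainL_one (a : ℕ) : chainL a 1 = [a] := by simp [chainL]

section Heads

variable {G : Type*} [Group G] {τ : ℕ → G} {M : ℕ}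

lemma comm_head (hc : ∀ i j, 1 ≤ i → j ≤ M → i + 1 < j → τ i * τ j = τ j * τ i)
    (a k : ℕ) (ha : 1 ≤ a) (hak : a + k ≤ M + 1) (l : List ℕ)
    (hl : ∀ y ∈ l, 1 ≤ y ∧ y + 2 ≤ a) (z : G) :
    P τ (chainL a k) * (P τ l * z) = P τ l * (P τ (chainL a k) * z) := by
  rw [← mul_assoc, chain_comm_block hc a k ha hak l hl, mul_assoc]

lemma absorb_head (τ : ℕ → G) (a k : ℕ) (z : G) :
    P τ (chainL (a+1) k) * (τ a * z) = P τ (chainL a (k+1)) * z := by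
  rw [← mul_assoc, chain_absorb]

lemma shift_head (hb : ∀ i, 1 ≤ i → i + 1 ≤ M → τ i * τ (i + 1) * τ i = τ (i + 1) * τ i * τ (i + 1))
    (hc : ∀ i j, 1 ≤ i → j ≤ M → i + 1 < j → τ i * τ j = τ j * τ i)
    (a k : ℕ) (ha : 1 ≤ a) (hak : a + k ≤ M + 1) (l : List ℕ)
    (hl : ∀ x ∈ l, a ≤ x ∧ x + 2 ≤ a + k) (z : G) :
    P τ (chainL a k) * (P τ (l.map (· + 1)) * z) = P τ l * (P τ (chainL a k) * z) := by
  rw [← mul_assoc, chain_shift_list hb hc a k ha hak l hl, mul_assoc]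

lemma shift1_head (hb : ∀ i, 1 ≤ i → i + 1 ≤ M → τ i * τ (i + 1) * τ i = τ (i + 1) * τ i * τ (i + 1))
    (hc : ∀ i j, 1 ≤ i → j ≤ M → i + 1 < j → τ i * τ j = τ j * τ i)
    (a k i : ℕ) (ha : 1 ≤ a) (h1 : a ≤ i) (h2 : i + 2 ≤ a + k) (h3 : a + k ≤ M + 1) (z : G) :
    P τ (chainL a k) * (τ (i+1) * z) = τ i * (P τ (chainL a k) * z) := by
  rw [← mul_assoc, chain_shift hb hc a ha k i h1 h2 h3, mul_assoc]

lemma swap_blocks_head (hc : ∀ i j, 1 ≤ i → j ≤ M → i + 1 < j → τ i * τ j = τ j * τ i)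
    (l l' : List ℕ) (hl : ∀ x ∈ l, 1 ≤ x ∧ x ≤ M) (hl' : ∀ y ∈ l', 1 ≤ y ∧ y ≤ M)
    (hfar : ∀ x ∈ l, ∀ y ∈ l', x + 1 < y ∨ y + 1 < x) (z : G) :
    P τ l * (P τ l' * z) = P τ l' * (P τ l * z) := by
  rw [← mul_assoc, comm_block hc l l' hl hl' hfar, mul_assoc]

lemma swap_single_head (hc : ∀ i j, 1 ≤ i → j ≤ M → i + 1 < j → τ i * τ j = τ j * τ i)
    (l : List ℕ) (x : ℕ) (hx1 : 1 ≤ x) (hxM : x ≤ M)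
    (hl : ∀ y ∈ l, 1 ≤ y ∧ y ≤ M ∧ (x + 1 < y ∨ y + 1 < x)) (z : G) :
    P τ l * (τ x * z) = τ x * (P τ l * z) := by
  rw [← mul_assoc, ← comm_list hc x hx1 hxM l hl, mul_assoc]

end Heads

/-- emitted words in the odd-`m` sweep -/
def Vl (q : ℕ) : ℕ → List ℕ
  | 0 => sparse 1 q
  | r+1 => sparse 2 r ++ (sparse (2*r+1+1+1) (q-(r+1)) ++ (sparse 1 r ++
      (sparse (2*r+1+1) (q-(r+1)) ++ (2*q :: Vl q r))))

/-- emitted words in the even-`m` sweep -/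
def Wl (u : ℕ) : ℕ → List ℕ
  | 0 => sparse 2 u
  | s+1 => sparse 1 (s+1) ++ (sparse (2*s+1+1+1+1) (u-(s+1)) ++ (sparse 2 s ++
      (sparse (2*s+1+1+1) (u-(s+1)) ++ ((2*u+1) :: Wl u s))))

section Gen

variable {G : Type*} [Group G] {τ : ℕ → G} {M : ℕ}

lemma gen_odd (hb : ∀ i, 1 ≤ i → i + 1 ≤ M → τ i * τ (i + 1) * τ i = τ (i + 1) * τ i * τ (i + 1))
    (hc : ∀ i j, 1 ≤ i → j ≤ M → i + 1 < j → τ i * τ j = τ j * τ i)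
    (q : ℕ) (hM : 2*q+1 ≤ M) :
    ∀ r, r ≤ q →
      P τ (chainL (2*r+1) (2*(q-r)+1)) *
        P τ (zig (sparse 2 q) (sparse 1 q ++ [2*q+1]) (2*r+1)) =
      P τ (Vl q r) * P τ (chainL 1 (2*q+1)) := by
  intro r
  induction r with
  | zero =>
      intro _
      rw [show 2*0+1 = 0+1 from by omega, show 2*(q-0)+1 = 2*q+1 from by omega]
      rw [zig_succ, zig_zero, List.append_nil]
      have hE : sparse 2 q = (sparse 1 q).map (· + 1) := by
        have := sparse_map_succ 1 q
        rw [show (1:ℕ)+1 = 2 from rfl] at this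
        exact this.symm
      rw [show (0:ℕ)+1 = 1 from rfl, Vl, hE,
        chain_shift_list hb hc 1 (2*q+1) (by omega) (by omega) (sparse 1 q)
          (fun x hx => by have := mem_sparse hx; omega)]
  | succ r ih =>
      intro hr
      obtain ⟨p, hp⟩ : ∃ p, q = r + 1 + p := ⟨q - r - 1, by omega⟩
      have hqp : q - (r+1) = p := by omega
      have hIH := ih (by omega)
      rw [show 2*(q-r)+1 = (2*p+1)+1+1 from by omega] at hIH
      have hzig : zig (sparse 2 q) (sparse 1 q ++ [2*q+1]) (2*(r+1)+1) =
          sparse 2 q ++ ((sparse 1 q ++ [2*q+1]) ++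
            zig (sparse 2 q) (sparse 1 q ++ [2*q+1]) (2*r+1)) := by
        rw [show 2*(r+1)+1 = (2*r+1)+1+1 from by omega, zig_succ, zig_succ]
      have hEsplit : sparse 2 q =
          sparse 2 r ++ ((2*r+1+1) :: (sparse (2*r+1+1+1) p).map (· + 1)) := by
        rw [hp, show r+1+p = r+(p+1) from by omega, sparse_append, sparse_succ,
          sparse_map_succ]
        simp only [show 2+2*r = 2*r+1+1 from by omega,
          show 2*r+1+1+2 = 2*r+1+1+1+1 from by omega]
      have hO1 : sparse 1 q = sparse 1 r ++ ((2*r+1) :: (sparse (2*r+1+1) p).map (· + 1)) := by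
        rw [hp, show r+1+p = r+(p+1) from by omega, sparse_append, sparse_succ,
          sparse_map_succ]
        simp only [show 1+2*r = 2*r+1 from by omega,
          show 2*r+1+2 = 2*r+1+1+1 from by omega]
      have hOsplit : sparse 1 q ++ [2*q+1] =
          sparse 1 r ++ ((2*r+1) :: ((sparse (2*r+1+1) p).map (· + 1) ++ [2*q+1])) := by
        rw [hO1]; simp
      rw [hzig, show 2*(r+1)+1 = 2*r+1+1+1 from by omega,
        show 2*(q-(r+1))+1 = 2*p+1 from by omega]
      rw [hEsplit, hOsplit] at hIH ⊢
      rw [Vl, hqp]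
      simp only [P_append, P_cons, P_nil, one_mul, mul_one, mul_assoc]
      rw [comm_head hc (2*r+1+1+1) (2*p+1) (by omega) (by omega) (sparse 2 r)
            (fun y hy => by have := mem_sparse hy; omega),
          absorb_head τ (2*r+1+1) (2*p+1),
          shift_head hb hc (2*r+1+1) ((2*p+1)+1) (by omega) (by omega)
            (sparse (2*r+1+1+1) p) (fun x hx => by have := mem_sparse hx; omega),
          comm_head hc (2*r+1+1) ((2*p+1)+1) (by omega) (by omega) (sparse 1 r)
            (fun y hy => by have := mem_sparse hy; omega),
          absorb_head τ (2*r+1) ((2*p+1)+1),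
          shift_head hb hc (2*r+1) ((2*p+1)+1+1) (by omega) (by omega)
            (sparse (2*r+1+1) p) (fun x hx => by have := mem_sparse hx; omega),
          shift1_head hb hc (2*r+1) ((2*p+1)+1+1) (2*q) (by omega) (by omega)
            (by omega) (by omega)]
      rw [hIH]

end Gen


section GenEven

variable {G : Type*} [Group G] {τ : ℕ → G} {M : ℕ}

lemma gen_even (hb : ∀ i, 1 ≤ i → i + 1 ≤ M → τ i * τ (i + 1) * τ i = τ (i + 1) * τ i * τ (i + 1))
    (hc : ∀ i j, 1 ≤ i → j ≤ M → i + 1 < j → τ i * τ j = τ j * τ i)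
    (u : ℕ) (hM : 2*u+1+1 ≤ M) :
    ∀ s, s ≤ u →
      P τ (chainL (2*s+1+1) (2*(u-s)+1)) *
        P τ (zig (sparse 1 (u+1)) (sparse 2 u ++ [2*u+1+1]) (2*s+1)) =
      P τ (Wl u s) * P τ (chainL 1 (2*u+1+1)) := by
  intro s
  induction s with
  | zero =>
      intro _
      rw [show 2*0+1+1 = 1+1 from by omega, show 2*(u-0)+1 = 2*u+1 from by omega,
        show 2*0+1 = 0+1 from by omega]
      rw [zig_succ, zig_zero, List.append_nil]
      have hO : sparse 1 (u+1) = 1 :: (sparse (1+1) u).map (· + 1) := by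
        rw [sparse_succ, sparse_map_succ]
      rw [Wl, hO]
      simp only [P_cons, mul_assoc]
      rw [absorb_head τ 1 (2*u+1),
        chain_shift_list hb hc 1 ((2*u+1)+1) (by omega) (by omega) (sparse (1+1) u)
          (fun x hx => by have := mem_sparse hx; omega)]
  | succ s ih =>
      intro hs
      obtain ⟨p, hp⟩ : ∃ p, u = s + 1 + p := ⟨u - s - 1, by omega⟩
      have hup : u - (s+1) = p := by omega
      have hIH := ih (by omega)
      rw [show 2*(u-s)+1 = (2*p+1)+1+1 from by omega] at hIH
      have hzig : zig (sparse 1 (u+1)) (sparse 2 u ++ [2*u+1+1]) (2*(s+1)+1) =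
          sparse 1 (u+1) ++ ((sparse 2 u ++ [2*u+1+1]) ++
            zig (sparse 1 (u+1)) (sparse 2 u ++ [2*u+1+1]) (2*s+1)) := by
        rw [show 2*(s+1)+1 = (2*s+1)+1+1 from by omega, zig_succ, zig_succ]
      have hOsplit : sparse 1 (u+1) =
          sparse 1 (s+1) ++ ((2*s+1+1+1) :: (sparse (2*s+1+1+1+1) p).map (· + 1)) := by
        rw [show u+1 = (s+1)+(p+1) from by omega, sparse_append,
          sparse_succ (1+2*(s+1)) p, sparse_map_succ]
        simp only [show 1+2*(s+1) = 2*s+1+1+1 from by omega,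
          show 2*s+1+1+1+2 = 2*s+1+1+1+1+1 from by omega]
      have hE1 : sparse 2 u = sparse 2 s ++ ((2*s+1+1) :: (sparse (2*s+1+1+1) p).map (· + 1)) := by
        rw [hp, show s+1+p = s+(p+1) from by omega, sparse_append, sparse_succ,
          sparse_map_succ]
        simp only [show 2+2*s = 2*s+1+1 from by omega,
          show 2*s+1+1+2 = 2*s+1+1+1+1 from by omega]
      have hEsplit : sparse 2 u ++ [2*u+1+1] =
          sparse 2 s ++ ((2*s+1+1) :: ((sparse (2*s+1+1+1) p).map (· + 1) ++ [2*u+1+1])) := by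
        rw [hE1]; simp
      rw [hzig, show 2*(s+1)+1+1 = 2*s+1+1+1+1 from by omega,
        show 2*(u-(s+1))+1 = 2*p+1 from by omega]
      rw [hOsplit, hEsplit] at hIH ⊢
      rw [Wl, hup]
      simp only [P_append, P_cons, P_nil, one_mul, mul_one, mul_assoc]
      rw [comm_head hc (2*s+1+1+1+1) (2*p+1) (by omega) (by omega) (sparse 1 (s+1))
            (fun y hy => by have := mem_sparse hy; omega),
          absorb_head τ (2*s+1+1+1) (2*p+1),
          shift_head hb hc (2*s+1+1+1) ((2*p+1)+1) (by omega) (by omega)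
            (sparse (2*s+1+1+1+1) p) (fun x hx => by have := mem_sparse hx; omega),
          comm_head hc (2*s+1+1+1) ((2*p+1)+1) (by omega) (by omega) (sparse 2 s)
            (fun y hy => by have := mem_sparse hy; omega),
          absorb_head τ (2*s+1+1) ((2*p+1)+1),
          shift_head hb hc (2*s+1+1) ((2*p+1)+1+1) (by omega) (by omega)
            (sparse (2*s+1+1+1) p) (fun x hx => by have := mem_sparse hx; omega),
          shift1_head hb hc (2*s+1+1) ((2*p+1)+1+1) (2*u+1) (by omega) (by omega)
            (by omega) (by omega)]
      rw [hIH]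

end GenEven


section ClaimB

variable {G : Type*} [Group G] {τ : ℕ → G} {M : ℕ}

lemma claimb_odd (hc : ∀ i j, 1 ≤ i → j ≤ M → i + 1 < j → τ i * τ j = τ j * τ i)
    (q : ℕ) (hM : 2*q+1 ≤ M) :
    ∀ r, r ≤ q →
      P τ (sparse 1 r ++ Vl q r) = P τ (zig (sparse 1 q) (sparse 2 q) (2*r+1)) := by
  intro r
  induction r with
  | zero =>
      intro _
      rw [show 2*0+1 = 0+1 from by omega, zig_succ, zig_zero, List.append_nil, Vl]
      simp [sparse]
  | succ r ih =>
      intro hr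
      obtain ⟨p, hp⟩ : ∃ p, q = r + 1 + p := ⟨q - r - 1, by omega⟩
      have hqp : q - (r+1) = p := by omega
      have hIH := ih (by omega)
      rw [P_append] at hIH
      have hzig : zig (sparse 1 q) (sparse 2 q) (2*(r+1)+1) =
          sparse 1 q ++ (sparse 2 q ++ zig (sparse 1 q) (sparse 2 q) (2*r+1)) := by
        rw [show 2*(r+1)+1 = (2*r+1)+1+1 from by omega, zig_succ, zig_succ]
      have hO2 : sparse 1 q = sparse 1 (r+1) ++ sparse (2*r+1+1+1) p := by
        rw [hp, sparse_append]
        simp only [show 1+2*(r+1) = 2*r+1+1+1 from by omega]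
      have hE2 : sparse 2 q = sparse 2 r ++ (sparse (2*r+1+1) p ++ [2*q]) := by
        rw [hp, show r+1+p = r+(p+1) from by omega, sparse_append,
          sparse_snoc (2+2*r) p]
        simp only [show 2+2*r = 2*r+1+1 from by omega,
          show 2*r+1+1+2*p = 2*q from by omega,
          show 2*(r+(p+1)) = 2*q from by omega, List.append_assoc]
      rw [hzig, Vl, hqp]
      simp only [P_append, P_cons, P_nil, P_singleton, one_mul, mul_one, mul_assoc]
      rw [← hIH, hO2, hE2]
      simp only [P_append, P_cons, P_nil, P_singleton, one_mul, mul_one, mul_assoc]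
      rw [swap_blocks_head hc (sparse 2 r) (sparse (2*r+1+1+1) p)
            (fun x hx => by have := mem_sparse hx; omega)
            (fun y hy => by have := mem_sparse hy; omega)
            (fun x hx y hy => by have h1 := mem_sparse hx; have h2 := mem_sparse hy; omega),
          swap_blocks_head hc (sparse 1 r) (sparse (2*r+1+1) p)
            (fun x hx => by have := mem_sparse hx; omega)
            (fun y hy => by have := mem_sparse hy; omega)
            (fun x hx y hy => by have h1 := mem_sparse hx; have h2 := mem_sparse hy; omega),
          swap_single_head hc (sparse 1 r) (2*q) (by omega) (by omega)
            (fun y hy => by have := mem_sparse hy; omega)]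

lemma claimb_even (hc : ∀ i j, 1 ≤ i → j ≤ M → i + 1 < j → τ i * τ j = τ j * τ i)
    (u : ℕ) (hM : 2*u+1+1 ≤ M) :
    ∀ s, s ≤ u →
      P τ (sparse 1 (u+1) ++ (sparse 2 s ++ Wl u s)) =
        P τ (zig (sparse 1 (u+1)) (sparse 2 u) (2*s+1+1)) := by
  intro s
  induction s with
  | zero =>
      intro _
      rw [show 2*0+1+1 = (0+1)+1 from by omega, zig_succ, zig_succ, zig_zero,
        List.append_nil, Wl]
      simp [sparse]
  | succ s ih =>
      intro hs
      obtain ⟨p, hp⟩ : ∃ p, u = s + 1 + p := ⟨u - s - 1, by omega⟩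
      have hup : u - (s+1) = p := by omega
      have hIH := ih (by omega)
      have hzig : zig (sparse 1 (u+1)) (sparse 2 u) (2*(s+1)+1+1) =
          sparse 1 (u+1) ++ (sparse 2 u ++ zig (sparse 1 (u+1)) (sparse 2 u) (2*s+1+1)) := by
        rw [show 2*(s+1)+1+1 = (2*s+1+1)+1+1 from by omega, zig_succ, zig_succ]
      have hE3 : sparse 2 u = sparse 2 (s+1) ++ sparse (2*s+1+1+1+1) p := by
        rw [hp, sparse_append]
        simp only [show 2+2*(s+1) = 2*s+1+1+1+1 from by omega]
      have hO3 : sparse 1 (u+1) = sparse 1 (s+1) ++ (sparse (2*s+1+1+1) p ++ [2*u+1]) := by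
        rw [show u+1 = (s+1)+(p+1) from by omega, sparse_append,
          sparse_snoc (1+2*(s+1)) p]
        simp only [show 1+2*(s+1) = 2*s+1+1+1 from by omega,
          show 2*s+1+1+1+2*p = 2*u+1 from by omega, List.append_assoc]
      rw [hzig, Wl, hup]
      simp only [P_append, P_cons, P_nil, P_singleton, one_mul, mul_one, mul_assoc]
      rw [← hIH, hO3, hE3]
      simp only [P_append, P_cons, P_nil, P_singleton, one_mul, mul_one, mul_assoc]
      rw [swap_blocks_head hc (sparse 1 (s+1)) (sparse (2*s+1+1+1+1) p)
            (fun x hx => by have := mem_sparse hx; omega)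
            (fun y hy => by have := mem_sparse hy; omega)
            (fun x hx y hy => by have h1 := mem_sparse hx; have h2 := mem_sparse hy; omega),
          swap_blocks_head hc (sparse 2 s) (sparse (2*s+1+1+1) p)
            (fun x hx => by have := mem_sparse hx; omega)
            (fun y hy => by have := mem_sparse hy; omega)
            (fun x hx y hy => by have h1 := mem_sparse hx; have h2 := mem_sparse hy; omega),
          swap_single_head hc (sparse 2 s) (2*u+1) (by omega) (by omega)
            (fun y hy => by have := mem_sparse hy; omega)]

end ClaimB


section Core

variable {G : Type*} [Group G] {τ : ℕ → G} {M : ℕ}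

lemma core_odd (hb : ∀ i, 1 ≤ i → i + 1 ≤ M → τ i * τ (i + 1) * τ i = τ (i + 1) * τ i * τ (i + 1))
    (hc : ∀ i j, 1 ≤ i → j ≤ M → i + 1 < j → τ i * τ j = τ j * τ i)
    (q : ℕ) (hM : 2*q+1 ≤ M) :
    P τ (zig (sparse 1 q ++ [2*q+1]) (sparse 2 q) (2*q+1+1)) =
      P τ (zig (sparse 1 q) (sparse 2 q) (2*q+1)) * P τ (chainL 1 (2*q+1)) := by
  have hg := gen_odd hb hc q hM q le_rfl
  have hch : P τ (chainL (2*q+1) (2*(q-q)+1)) = τ (2*q+1) := by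
    rw [show 2*(q-q)+1 = 1 from by omega, chainL_one, P_singleton]
  rw [hch] at hg
  have hcb := claimb_odd hc q hM q le_rfl
  rw [show 2*q+1+1 = (2*q+1)+1 from rfl, zig_succ]
  rw [P_append, P_append, P_singleton, mul_assoc, hg, ← mul_assoc, ← P_append, hcb]

lemma core_even (hb : ∀ i, 1 ≤ i → i + 1 ≤ M → τ i * τ (i + 1) * τ i = τ (i + 1) * τ i * τ (i + 1))
    (hc : ∀ i j, 1 ≤ i → j ≤ M → i + 1 < j → τ i * τ j = τ j * τ i)
    (u : ℕ) (hM : 2*u+1+1 ≤ M) :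
    P τ (zig (sparse 1 (u+1)) (sparse 2 u ++ [2*u+1+1]) (2*u+1+1+1)) =
      P τ (zig (sparse 1 (u+1)) (sparse 2 u) (2*u+1+1)) * P τ (chainL 1 (2*u+1+1)) := by
  have hg := gen_even hb hc u hM u le_rfl
  have hch : P τ (chainL (2*u+1+1) (2*(u-u)+1)) = τ (2*u+1+1) := by
    rw [show 2*(u-u)+1 = 1 from by omega, chainL_one, P_singleton]
  rw [hch] at hg
  have hcb := claimb_even hc u hM u le_rfl
  rw [P_append] at hcb
  rw [show 2*u+1+1+1 = (2*u+1)+1+1 from rfl, zig_succ, zig_succ]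
  rw [P_append, P_append, P_append, P_singleton]
  rw [P_append] at hcb
  simp only [mul_assoc]
  rw [hg, ← hcb]
  simp only [mul_assoc]

end Core


section Conv

variable {G : Type*} [Group G]

lemma prodAlt_zig (τ : ℕ → G) : ∀ (n : ℕ) (x y : List ℕ),
    P τ (zig x y n) = prodAlt (P τ x) (P τ y) n := by
  intro n
  induction n with
  | zero => intro x y; rfl
  | succ n ih => intro x y; rw [zig_succ, P_append, prodAlt, ih]

lemma range_if_prodAlt : ∀ (n : ℕ) (a b : G),
    ((List.range n).map (fun t => if t % 2 = 0 then a else b)).prod = prodAlt a b n := by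
  intro n
  induction n with
  | zero => intro a b; rfl
  | succ n ih =>
      intro a b
      rw [List.range_succ_eq_map, List.map_cons, List.map_map, List.prod_cons]
      have hfun : ∀ t ∈ List.range n, ((fun t => if t % 2 = 0 then a else b) ∘ Nat.succ) t
          = (fun t => if t % 2 = 0 then b else a) t := by
        intro t _
        simp only [Function.comp_apply]
        rcases Nat.mod_two_eq_zero_or_one t with h | h
        · rw [if_neg (by omega : ¬ t.succ % 2 = 0), if_pos h]
        · rw [if_pos (by omega : t.succ % 2 = 0), if_neg (by omega : ¬ t % 2 = 0)]
      rw [List.map_congr_left hfun, ih, prodAlt]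
      norm_num

lemma filter_odd : ∀ n : ℕ, (List.range n).filter (fun i => i % 2 == 1) = sparse 1 (n/2) := by
  intro n
  induction n with
  | zero => rfl
  | succ n ih =>
      rw [List.range_succ, List.filter_append, ih]
      rcases Nat.mod_two_eq_zero_or_one n with h | h
      · have h2 : (n+1)/2 = n/2 := by omega
        simp [h, h2]
      · have h2 : (n+1)/2 = n/2 + 1 := by omega
        rw [h2, sparse_snoc]
        have h3 : 1 + 2*(n/2) = n := by omega
        simp [h, h3]

lemma filter_even : ∀ n : ℕ, (List.range n).filter (fun i => i % 2 == 0 && i != 0) =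
    sparse 2 ((n-1)/2) := by
  intro n
  induction n with
  | zero => rfl
  | succ n ih =>
      rw [List.range_succ, List.filter_append, ih]
      rcases Nat.eq_zero_or_pos n with rfl | hn
      · rfl
      rcases Nat.mod_two_eq_zero_or_one n with h | h
      · have h2 : (n+1-1)/2 = (n-1)/2 + 1 := by omega
        rw [h2, sparse_snoc]
        have h3 : 2 + 2*((n-1)/2) = n := by omega
        simp [h, h3, Nat.pos_iff_ne_zero.mp hn]
      · have h2 : (n-1)/2 = n/2 := by omega
        simp [h, h2]

lemma desc_eq : ∀ (k a : ℕ),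
    (List.range k).map (fun j => a + k - j) = chainL (a+1) k := by
  intro k
  induction k with
  | zero => intro a; rfl
  | succ k ih =>
      intro a
      rw [List.range_succ_eq_map, List.map_cons, List.map_map, chainL_succ]
      rw [show a + (k+1) - 0 = a+1+k from by omega]
      congr 1
      rw [← ih a]
      apply List.map_congr_left
      intro j hj
      simp only [Function.comp_apply]
      omega

lemma beta_eq (τ : ℕ → G) : ∀ K : ℕ,
    ((List.range K).map (fun k => (((List.range (k+1)).map (fun j => τ (k+1-j))).prod))).prod
      = betaP τ K := by
  intro K
  induction K with
  | zero => rfl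
  | succ K ih =>
      rw [List.range_succ, List.map_append, List.prod_append, ih, List.map_singleton,
        List.prod_singleton, betaP]
      congr 1
      have h1 : ((List.range (K+1)).map (fun j => K+1-j)).map τ
          = (List.range (K+1)).map (fun j => τ (K+1-j)) := by
        rw [List.map_map]; rfl
      rw [P, ← h1]
      congr 1
      have := desc_eq (K+1) 0
      simp only [Nat.zero_add] at this
      rw [← this]

end Conv


section Main

variable {G : Type*} [Group G]

lemma main_core (τ : ℕ → G) : ∀ n, 2 ≤ n →
    (∀ i, 1 ≤ i → i + 1 ≤ n - 1 → τ i * τ (i + 1) * τ i = τ (i + 1) * τ i * τ (i + 1)) →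
    (∀ i j, 1 ≤ i → j ≤ n - 1 → i + 1 < j → τ i * τ j = τ j * τ i) →
    prodAlt (P τ (sparse 1 (n/2))) (P τ (sparse 2 ((n-1)/2))) n = betaP τ (n-1) := by
  refine Nat.le_induction ?_ ?_
  · intro _ _
    show P τ (sparse 1 1) * (P τ (sparse 2 0) * 1) = 1 * P τ (chainL 1 1)
    rw [chainL_one]
    simp [sparse]
  · intro n hn IH hb hc
    obtain ⟨m, rfl⟩ : ∃ m, n = m + 1 := ⟨n - 1, by omega⟩
    have hsub : m + 1 + 1 - 1 = m + 1 := by omega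
    rw [hsub] at hb hc
    have hb' : ∀ i, 1 ≤ i → i + 1 ≤ m + 1 - 1 → τ i * τ (i + 1) * τ i = τ (i + 1) * τ i * τ (i + 1) :=
      fun i h1 h2 => hb i h1 (by omega)
    have hc' : ∀ i j, 1 ≤ i → j ≤ m + 1 - 1 → i + 1 < j → τ i * τ j = τ j * τ i :=
      fun i j h1 h2 h3 => hc i j h1 (by omega) h3
    have hIH := IH hb' hc'
    rw [show m + 1 - 1 = m from by omega] at hIH
    rw [hsub, show betaP τ (m+1) = betaP τ m * P τ (chainL 1 (m+1)) from rfl, ← hIH]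
    rcases Nat.mod_two_eq_zero_or_one m with hm | hm
    · -- m even, m = 2q : use core_odd
      obtain ⟨q, rfl⟩ : ∃ q, m = 2*q := ⟨m/2, by omega⟩
      have e1 : (2*q+1+1)/2 = q+1 := by omega
      have e3 : (2*q+1)/2 = q := by omega
      have e4 : 2*q/2 = q := by omega
      rw [e1, e3, e4]
      rw [← prodAlt_zig, ← prodAlt_zig]
      have hsnoc : sparse 1 (q+1) = sparse 1 q ++ [2*q+1] := by
        rw [sparse_snoc]
        simp only [show 1+2*q = 2*q+1 from by omega]
      rw [hsnoc, show (2*q+1+1 : ℕ) = 2*q+1+1 from rfl]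
      exact core_odd hb hc q (by omega)
    · -- m odd, m = 2u+1 : use core_even
      obtain ⟨u, rfl⟩ : ∃ u, m = 2*u+1 := ⟨m/2, by omega⟩
      have e1 : (2*u+1+1+1)/2 = u+1 := by omega
      have e3 : (2*u+1+1)/2 = u+1 := by omega
      have e4 : (2*u+1)/2 = u := by omega
      rw [e1, e3, e4]
      rw [← prodAlt_zig, ← prodAlt_zig]
      have hsnoc : sparse 2 (u+1) = sparse 2 u ++ [2*u+1+1] := by
        rw [sparse_snoc]
        simp only [show 2+2*u = 2*u+1+1 from by omega]
      rw [hsnoc]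
      exact core_even hb hc u (by omega)

end Main

end Stmt11Aux

/-- in the braid group `B_n` (formalized here as: for every group `G`
with elements `τ₁, …, τ_{n-1}` satisfying the braid relations), the alternating
product of `n` factors `σ_odd = δ_odd δ_even δ_odd δ_even ⋯` equals the half-twist
`β = τ₁(τ₂τ₁)⋯(τ_{n-1}τ_{n-2}⋯τ₁)`.  Here `δ_odd` (resp. `δ_even`) is the product
of the odd-indexed (resp. even-indexed) generators `τ_i`, `1 ≤ i ≤ n-1`. -/
theorem stmt11 (n : ℕ) (hn : 2 ≤ n) (G : Type*) [Group G] (τ : ℕ → G)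
    (hbraid : ∀ i, 1 ≤ i → i + 1 ≤ n - 1 →
      τ i * τ (i + 1) * τ i = τ (i + 1) * τ i * τ (i + 1))
    (hcomm : ∀ i j, 1 ≤ i → j ≤ n - 1 → i + 1 < j → τ i * τ j = τ j * τ i) :
    (let δodd : G := (((List.range n).filter (fun i => i % 2 == 1)).map τ).prod
     let δeven : G := (((List.range n).filter (fun i => i % 2 == 0 && i != 0)).map τ).prod
     let σodd : G :=
       ((List.range n).map (fun t => if t % 2 = 0 then δodd else δeven)).prod
     let β : G :=
       ((List.range (n - 1)).map
         (fun k => (((List.range (k + 1)).map (fun j => τ (k + 1 - j))).prod))).prod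
     σodd = β) := by
  show ((List.range n).map (fun t => if t % 2 = 0 then
      (((List.range n).filter (fun i => i % 2 == 1)).map τ).prod
    else (((List.range n).filter (fun i => i % 2 == 0 && i != 0)).map τ).prod)).prod =
    ((List.range (n - 1)).map
      (fun k => (((List.range (k + 1)).map (fun j => τ (k + 1 - j))).prod))).prod
  rw [Stmt11Aux.range_if_prodAlt, Stmt11Aux.beta_eq, Stmt11Aux.filter_odd,
    Stmt11Aux.filter_even]
  exact Stmt11Aux.main_core τ n hn hbraid hcomm
end

section
/- In the braid group B_n, define δ_odd and δ_even as products of the odd-indexed and even-indexed generators respectively (δ_odd = τ₁τ₃τ₅···, δ_even = τ₂τ₄···, up to τ_{n-1} or τ_{n-2} depending on parity of n), define ℓ_n = n−1 for n odd and n−2 for n even, β_k = τ_k τ_{k+1}···τ_{n-1}, γ_n = β_{ℓ_n} β_{ℓ_n − 2}···β_2 (with γ₂ = 1), and the Coxeter element C = τ₁τ₂···τ_{n-1}. Then δ_even · δ_odd · γ_n = γ_n · C. -/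
namespace Stmt12Aux

def β (n : ℕ) {G : Type*} [Group G] (τ : ℕ → G) (m : ℕ) : G :=
  ((List.range (n - m)).map (fun j => τ (m + j))).prod

def ell (n : ℕ) : ℕ := if n % 2 = 1 then n - 1 else n - 2

def γ (n : ℕ) {G : Type*} [Group G] (τ : ℕ → G) : G :=
  ((List.range (ell n / 2)).map (fun t => β n τ (ell n - 2 * t))).prod

def δo (n : ℕ) {G : Type*} [Group G] (τ : ℕ → G) : G :=
  ((List.range (n / 2)).map (fun t => τ (2 * t + 1))).prod

def δe (n : ℕ) {G : Type*} [Group G] (τ : ℕ → G) : G :=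
  ((List.range ((n - 1) / 2)).map (fun t => τ (2 * t + 2))).prod

lemma filter_odd (n : ℕ) :
    (List.range n).filter (fun i => i % 2 == 1) = (List.range (n / 2)).map (fun t => 2 * t + 1) := by
  induction n with
  | zero => simp
  | succ n ih =>
    rw [List.range_succ, List.filter_append, ih]
    by_cases h : n % 2 = 1
    · have h2 : (n + 1) / 2 = n / 2 + 1 := by omega
      rw [h2, List.range_succ, List.map_append]
      have hf : (List.filter (fun i => i % 2 == 1) [n]) = [n] := by simp [h]
      rw [hf]
      have : 2 * (n / 2) + 1 = n := by omega
      simp [this]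
    · have h2 : (n + 1) / 2 = n / 2 := by omega
      rw [h2]
      have hf : (List.filter (fun i => i % 2 == 1) [n]) = [] := by
        have : n % 2 = 0 := by omega
        simp [this]
      rw [hf, List.append_nil]

lemma filter_even (n : ℕ) :
    (List.range n).filter (fun i => i % 2 == 0 && i != 0) =
      (List.range ((n - 1) / 2)).map (fun t => 2 * t + 2) := by
  induction n with
  | zero => simp
  | succ n ih =>
    rw [List.range_succ, List.filter_append, ih]
    by_cases h : n % 2 = 0 ∧ n ≠ 0
    · have h2 : (n + 1 - 1) / 2 = (n - 1) / 2 + 1 := by omega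
      rw [h2, List.range_succ, List.map_append]
      have : (List.filter (fun i => i % 2 == 0 && i != 0) [n]) = [n] := by
        simp [h.1, h.2]
      rw [this]
      have h3 : 2 * ((n - 1) / 2) + 2 = n := by omega
      simp [h3]
    · have h2 : (n + 1 - 1) / 2 = (n - 1) / 2 := by omega
      rw [h2]
      have : (List.filter (fun i => i % 2 == 0 && i != 0) [n]) = [] := by
        rcases Nat.eq_zero_or_pos n with h0 | h0
        · simp [h0]
        · have : n % 2 = 1 := by omega
          simp [this]
      rw [this, List.append_nil]

lemma β_cons (n : ℕ) {G : Type*} [Group G] (τ : ℕ → G) (m : ℕ) (h : m < n) :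
    β n τ m = τ m * β n τ (m + 1) := by
  unfold β
  have h1 : n - m = (n - (m + 1)) + 1 := by omega
  rw [h1, List.range_succ_eq_map, List.map_cons, List.prod_cons, List.map_map]
  refine congrArg₂ (· * ·) rfl ?_
  apply congrArg List.prod
  apply List.map_congr_left
  intro t _
  show τ (m + (t + 1)) = τ (m + 1 + t)
  congr 1
  omega

lemma β_shift (n : ℕ) {G : Type*} [Group G] (τ : ℕ → G) (m : ℕ) :
    β (n - 2) (fun i => τ (i + 2)) m = β n τ (m + 2) := by
  unfold β
  have h1 : n - 2 - m = n - (m + 2) := by omega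
  rw [h1]
  apply congrArg List.prod
  apply List.map_congr_left
  intro t _
  show τ (m + t + 2) = τ (m + 2 + t)
  congr 1
  omega

lemma comm_β {G : Type*} [Group G] (τ : ℕ → G) (n i m : ℕ)
    (h : ∀ j, m ≤ j → j ≤ n - 1 → Commute (τ i) (τ j)) :
    Commute (τ i) (β n τ m) := by
  unfold β
  apply Commute.list_prod_right
  intro y hy
  simp only [List.mem_map, List.mem_range] at hy
  obtain ⟨j, hj, rfl⟩ := hy
  exact h (m + j) (by omega) (by omega)

theorem main : ∀ n : ℕ, 2 ≤ n → ∀ (G : Type*) [Group G] (τ : ℕ → G),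
    (∀ i j, 1 ≤ i → j ≤ n - 1 → i + 1 < j → τ i * τ j = τ j * τ i) →
    δe n τ * δo n τ * γ n τ = γ n τ * β n τ 1 := by
  intro n
  induction n using Nat.strong_induction_on with
  | _ n IH =>
    intro hn G _ τ hcomm
    rcases Nat.lt_or_ge n 4 with h4 | h4
    · interval_cases n
      · -- n = 2
        simp [δe, δo, γ, β, ell, List.range_succ]
      · -- n = 3
        simp [δe, δo, γ, β, ell, List.range_succ]
        group
    · -- n ≥ 4
      set τ' : ℕ → G := fun i => τ (i + 2) with hτ'
      have hell_even : ell n % 2 = 0 := by unfold ell; split <;> omega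
      have hell' : ell n = ell (n - 2) + 2 := by
        unfold ell
        have hp : (n - 2) % 2 = n % 2 := by omega
        rw [hp]
        split <;> omega
      have hell'_even : ell (n - 2) % 2 = 0 := by unfold ell; split <;> omega
      -- δo decomposition
      have hδo : δo n τ = τ 1 * δo (n - 2) τ' := by
        unfold δo
        have : n / 2 = (n - 2) / 2 + 1 := by omega
        rw [this, List.range_succ_eq_map, List.map_cons, List.prod_cons, List.map_map]
        refine congrArg₂ (· * ·) rfl ?_
        apply congrArg List.prod
        apply List.map_congr_left
        intro t _
        show τ (2 * (t + 1) + 1) = τ (2 * t + 1 + 2)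
        have ht : 2 * (t + 1) + 1 = 2 * t + 1 + 2 := by omega
        rw [ht]
      -- δe decomposition
      have hδe : δe n τ = τ 2 * δe (n - 2) τ' := by
        unfold δe
        have : (n - 1) / 2 = (n - 2 - 1) / 2 + 1 := by omega
        rw [this, List.range_succ_eq_map, List.map_cons, List.prod_cons, List.map_map]
        refine congrArg₂ (· * ·) rfl ?_
        apply congrArg List.prod
        apply List.map_congr_left
        intro t _
        show τ (2 * (t + 1) + 2) = τ (2 * t + 2 + 2)
        have ht : 2 * (t + 1) + 2 = 2 * t + 2 + 2 := by omega
        rw [ht]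
      -- γ decomposition
      have hγlist : γ n τ = γ (n - 2) τ' * β n τ 2 := by
        unfold γ
        have h1 : ell n / 2 = ell (n - 2) / 2 + 1 := by omega
        rw [h1, List.range_succ, List.map_append, List.prod_append]
        congr 1
        · apply congrArg
          apply List.map_congr_left
          intro t ht
          simp only [List.mem_range] at ht
          rw [β_shift]
          congr 1
          omega
        · simp
          congr 1
          omega
      -- IH
      have hcomm' : ∀ i j, 1 ≤ i → j ≤ n - 2 - 1 → i + 1 < j → τ' i * τ' j = τ' j * τ' i := by
        intro i j hi hj hij
        exact hcomm (i + 2) (j + 2) (by omega) (by omega) (by omega)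
      have hIH := IH (n - 2) (by omega) (by omega) G τ' hcomm'
      rw [β_shift] at hIH
      have h12 : (1 : ℕ) + 2 = 3 := rfl
      rw [h12] at hIH
      -- commutation facts
      have hc1 : Commute (δe (n - 2) τ') (τ 1) := by
        unfold δe
        apply Commute.list_prod_left
        intro y hy
        simp only [List.mem_map, List.mem_range] at hy
        obtain ⟨t, ht, rfl⟩ := hy
        exact (hcomm 1 (2 * t + 2 + 2) (by omega) (by omega) (by omega)).symm
      have hcγ : ∀ i, i = 1 ∨ i = 2 → Commute (τ i) (γ (n - 2) τ') := by
        intro i hi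
        unfold γ
        apply Commute.list_prod_right
        intro y hy
        simp only [List.mem_map, List.mem_range] at hy
        obtain ⟨t, ht, rfl⟩ := hy
        rw [β_shift]
        apply comm_β
        intro j hj hj'
        exact hcomm i j (by omega) (by omega) (by omega)
      have hcβ3 : Commute (τ 1) (β n τ 3) := by
        apply comm_β
        intro j hj hj'
        exact hcomm 1 j (by omega) (by omega) (by omega)
      -- finish
      rw [hδo, hδe, hγlist]
      have hβ1 : β n τ 1 = τ 1 * β n τ 2 := β_cons n τ 1 (by omega)
      have hβ2 : β n τ 2 = τ 2 * β n τ 3 := β_cons n τ 2 (by omega)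
      have key1 : δe (n-2) τ' * (τ 1 * δo (n-2) τ') = τ 1 * (δe (n-2) τ' * δo (n-2) τ') := by
        rw [← mul_assoc, hc1.eq, mul_assoc]
      calc τ 2 * δe (n-2) τ' * (τ 1 * δo (n-2) τ') * (γ (n-2) τ' * β n τ 2)
          = τ 2 * (δe (n-2) τ' * (τ 1 * δo (n-2) τ')) * (γ (n-2) τ' * β n τ 2) := by group
        _ = τ 2 * (τ 1 * (δe (n-2) τ' * δo (n-2) τ')) * (γ (n-2) τ' * β n τ 2) := by rw [key1]
        _ = τ 2 * τ 1 * (δe (n-2) τ' * δo (n-2) τ' * γ (n-2) τ') * β n τ 2 := by group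
        _ = τ 2 * τ 1 * (γ (n-2) τ' * β n τ 3) * β n τ 2 := by rw [hIH]
        _ = γ (n-2) τ' * (τ 2 * (τ 1 * β n τ 3) * β n τ 2) := by
            rw [← mul_assoc, ← mul_assoc, mul_assoc (τ 2), (hcγ 1 (Or.inl rfl)).eq,
               ← mul_assoc, (hcγ 2 (Or.inr rfl)).eq]; group
        _ = γ (n-2) τ' * (β n τ 2 * β n τ 1) := by
            rw [hcβ3.eq, hβ1, hβ2]; group
        _ = γ (n-2) τ' * β n τ 2 * β n τ 1 := by group

end Stmt12Aux

/-- in the braid group `B_n` (formalized here as: for every group `G`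
with elements `τ₁, …, τ_{n-1}` satisfying the braid relations), with
`β_k = τ_k τ_{k+1} ⋯ τ_{n-1}`, `ℓ_n = n-1` (`n` odd) or `n-2` (`n` even),
`γ_n = β_{ℓ_n} β_{ℓ_n-2} ⋯ β_2` (`γ₂ = 1`), and the Coxeter element
`C = τ₁ τ₂ ⋯ τ_{n-1}`, we have `δ_even · δ_odd · γ_n = γ_n · C`. -/
theorem stmt12 (n : ℕ) (hn : 2 ≤ n) (G : Type*) [Group G] (τ : ℕ → G)
    (hbraid : ∀ i, 1 ≤ i → i + 1 ≤ n - 1 →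
      τ i * τ (i + 1) * τ i = τ (i + 1) * τ i * τ (i + 1))
    (hcomm : ∀ i j, 1 ≤ i → j ≤ n - 1 → i + 1 < j → τ i * τ j = τ j * τ i) :
    (let δodd : G := (((List.range n).filter (fun i => i % 2 == 1)).map τ).prod
     let δeven : G := (((List.range n).filter (fun i => i % 2 == 0 && i != 0)).map τ).prod
     let βk : ℕ → G := fun m => (((List.range (n - m)).map (fun j => τ (m + j))).prod)
     let ℓ : ℕ := if n % 2 = 1 then n - 1 else n - 2
     let γ : G := ((List.range (ℓ / 2)).map (fun t => βk (ℓ - 2 * t))).prod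
     let C : G := ((List.range (n - 1)).map (fun j => τ (j + 1))).prod
     δeven * δodd * γ = γ * C) := by
  have key := Stmt12Aux.main n hn G τ hcomm
  simp only []
  rw [Stmt12Aux.filter_odd, Stmt12Aux.filter_even, List.map_map, List.map_map]
  have hδo : ((List.range (n/2)).map (τ ∘ fun t => 2*t+1)).prod = Stmt12Aux.δo n τ := rfl
  have hδe : ((List.range ((n-1)/2)).map (τ ∘ fun t => 2*t+2)).prod = Stmt12Aux.δe n τ := rfl
  have hC : ((List.range (n - 1)).map (fun j => τ (j + 1))).prod = Stmt12Aux.β n τ 1 := by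
    unfold Stmt12Aux.β
    congr 1
    apply List.map_congr_left
    intro t _
    congr 1
    omega
  rw [hδo, hδe, hC]
  exact key
end

section
/- Let D be the n×n Vandermonde matrix with D_{jα} = z_j^α (j = 1,...,n; α = 0,...,n−1), where z₁,...,z_n are pairwise distinct complex numbers. Then D^T · diag(χ₁,...,χ_n) · D = η, where χ_j = 1/∏_{m ≠ j}(z_j − z_m) and η is the matrix with η_{αβ} = 0 if α+β < n−1, η_{αβ} = 1 if α+β = n−1, and η_{αβ} = m_{α+β−n+1}(z) if α+β > n−1, with m_k the complete homogeneous symmetric polynomial. -/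
/-!
Entry `(α, β)` of `Dᵀ · diag χ · D` is `F_s(α + β)` for `s` the set of all nodes, where
`F_s(k) = ∑_{j ∈ s} z_j^k / ∏_{m ∈ s, m ≠ j} (z_j - z_m)` is the divided difference of `x ↦ x^k`.
For `k < #s`, `F_s(k)` is the coefficient of `x^(#s-1)` in the Lagrange interpolant of `x^k`, which
is `x^k` itself. Adjoining a node `a` to `s` gives `F_{s∪a}(k+1) = z_a F_{s∪a}(k) + F_s(k)`, the
recurrence `h_{m+1}(s∪a) = z_a h_m(s∪a) + h_{m+1}(s)` of the complete homogeneous symmetric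
polynomials, so induction on `s` gives `F_s(k + #s - 1) = h_k(s)`.
-/

open Finset Polynomial

section Hsymm

variable {ι R : Type*} [DecidableEq ι] [CommSemiring R]

theorem Finset.sym_insert_succ (a : ι) (s : Finset ι) (m : ℕ) :
    (insert a s).sym (m + 1) = ((insert a s).sym m).image (Sym.cons a) ∪ s.sym (m + 1) := by
  ext μ
  simp only [mem_union, mem_image, mem_sym_iff]
  constructor
  · intro h
    by_cases ha : a ∈ μ
    · exact Or.inl ⟨μ.erase a ha, fun b hb => h b (Multiset.mem_of_mem_erase hb),
        Sym.cons_erase ha⟩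
    · refine Or.inr fun b hb => (mem_insert.mp (h b hb)).resolve_left ?_
      rintro rfl
      exact ha hb
  · rintro (⟨ν, hν, rfl⟩ | h) b hb
    · rcases Sym.mem_cons.mp hb with rfl | hb
      · exact mem_insert_self b s
      · exact hν b hb
    · exact mem_insert_of_mem (h b hb)

-- `MvPolynomial.hsymm` in the variables indexed by `s`, evaluated at `z`.
def hsymmEval (s : Finset ι) (z : ι → R) (m : ℕ) : R :=
  ∑ μ ∈ s.sym m, ((μ : Multiset ι).map z).prod

@[simp]
theorem hsymmEval_zero (s : Finset ι) (z : ι → R) : hsymmEval s z 0 = 1 := by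
  simp only [hsymmEval, sym_zero, sum_singleton]
  rfl

theorem hsymmEval_insert_succ (z : ι → R) {a : ι} {s : Finset ι} (ha : a ∉ s) (m : ℕ) :
    hsymmEval (insert a s) z (m + 1) =
      z a * hsymmEval (insert a s) z m + hsymmEval s z (m + 1) := by
  have hdisj : Disjoint (((insert a s).sym m).image (Sym.cons a)) (s.sym (m + 1)) := by
    refine disjoint_left.mpr fun μ hμ hμs => ?_
    obtain ⟨ν, -, rfl⟩ := mem_image.mp hμ
    exact ha (mem_sym_iff.mp hμs a (Sym.mem_cons_self a ν))
  rw [hsymmEval, sym_insert_succ, sum_union hdisj,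
    sum_image fun x _ y _ h => (Sym.cons_inj_right a x y).mp h, hsymmEval, mul_sum]
  congr 1
  exact sum_congr rfl fun ν _ => by rw [Sym.coe_cons, Multiset.map_cons, Multiset.prod_cons]

end Hsymm

section DivDiff

variable {ι K : Type*} [DecidableEq ι] [Field K]

def powDivDiff (s : Finset ι) (z : ι → K) (k : ℕ) : K :=
  ∑ j ∈ s, z j ^ k / ∏ m ∈ s.erase j, (z j - z m)

@[simp]
theorem powDivDiff_singleton (a : ι) (z : ι → K) (k : ℕ) : powDivDiff {a} z k = z a ^ k := by
  simp [powDivDiff]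

theorem powDivDiff_of_lt_card {s : Finset ι} {z : ι → K} (hz : Set.InjOn z s) {k : ℕ}
    (hk : k < #s) : powDivDiff s z k = if #s - 1 = k then 1 else 0 := by
  rw [← coeff_X_pow, Lagrange.coeff_eq_sum hz (by rwa [degree_X_pow, Nat.cast_lt])]
  simp [powDivDiff]

theorem powDivDiff_insert_succ {a : ι} {s : Finset ι} {z : ι → K} (ha : a ∉ s)
    (hz : ∀ j ∈ s, z j ≠ z a) (k : ℕ) :
    powDivDiff (insert a s) z (k + 1) = z a * powDivDiff (insert a s) z k + powDivDiff s z k := by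
  rw [powDivDiff, powDivDiff, powDivDiff, mul_sum, sum_insert ha, sum_insert ha, add_assoc,
    ← sum_add_distrib, pow_succ', mul_div_assoc]
  congr 1
  refine sum_congr rfl fun j hj => ?_
  have hja : j ≠ a := fun h => ha (h ▸ hj)
  rw [erase_insert_of_ne hja.symm, prod_insert fun h => ha (mem_of_mem_erase h)]
  have := sub_ne_zero_of_ne (hz j hj)
  field_simp
  ring

theorem powDivDiff_add_card_sub_one {s : Finset ι} (hs : s.Nonempty) {z : ι → K}
    (hz : Set.InjOn z s) (k : ℕ) : powDivDiff s z (k + (#s - 1)) = hsymmEval s z k := by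
  induction hs using Nonempty.cons_induction generalizing k with
  | singleton a =>
    simp only [card_singleton, Nat.sub_self, add_zero, powDivDiff_singleton]
    simp [hsymmEval, sym_singleton, Sym.coe_replicate]
  | cons a t hat ht ih =>
    rw [cons_eq_insert] at hz ⊢
    have hcard : #(insert a t) - 1 = #t := by simp [card_insert_of_notMem hat]
    have hza : ∀ j ∈ t, z j ≠ z a := fun j hj h =>
      hat (hz (mem_insert_of_mem hj) (mem_insert_self a t) h ▸ hj)
    rw [hcard]
    induction k with
    | zero =>
      rw [zero_add, powDivDiff_of_lt_card hz (by rw [card_insert_of_notMem hat]; omega),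
        if_pos hcard, hsymmEval_zero]
    | succ k ihk =>
      have ht_pos : 0 < #t := card_pos.mpr ht
      rw [add_right_comm, powDivDiff_insert_succ hat hza, ihk,
        show k + #t = k + 1 + (#t - 1) by omega, ih (hz.mono (subset_insert a t)),
        hsymmEval_insert_succ z hat]

end DivDiff

theorem stmt15_general (n : ℕ) (z : Fin n → ℂ) (hz : Function.Injective z) :
    (let D : Matrix (Fin n) (Fin n) ℂ := Matrix.of fun j α => z j ^ (α : ℕ)
     let χ : Fin n → ℂ := fun j => (∏ m ∈ Finset.univ.erase j, (z j - z m))⁻¹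
     let η : Matrix (Fin n) (Fin n) ℂ := Matrix.of fun α β =>
       if (α : ℕ) + (β : ℕ) < n - 1 then 0
       else if (α : ℕ) + (β : ℕ) = n - 1 then 1
       else ∑ μ : Sym (Fin n) ((α : ℕ) + (β : ℕ) - n + 1), (μ.1.map z).prod
     D.transpose * Matrix.diagonal χ * D = η) := by
  ext α β
  rw [Matrix.mul_apply]
  simp only [Matrix.mul_diagonal, Matrix.transpose_apply, Matrix.of_apply]
  have hentry : ∑ j, z j ^ (α : ℕ) * (∏ m ∈ univ.erase j, (z j - z m))⁻¹ * z j ^ (β : ℕ) =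
      powDivDiff univ z (α + β) :=
    sum_congr rfl fun j _ => by rw [pow_add, div_eq_mul_inv]; ring
  have hcard : #(univ : Finset (Fin n)) = n := card_fin n
  rw [hentry]
  split_ifs with hlt heq
  · rw [powDivDiff_of_lt_card hz.injOn (by omega), if_neg (by omega)]
  · rw [powDivDiff_of_lt_card hz.injOn (by omega), if_pos (by omega)]
  · have h := powDivDiff_add_card_sub_one (univ_nonempty_iff.mpr ⟨α⟩) hz.injOn (α + β - n + 1)
    rwa [hcard, show (α : ℕ) + β - n + 1 + (n - 1) = α + β by omega, hsymmEval, sym_univ] at h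

/-- for the Vandermonde matrix `D_{jα} = z_j^α` with pairwise
distinct `z_j`, one has `Dᵀ · diag(χ₁,…,χ_n) · D = η`, where
`χ_j = 1/∏_{m≠j}(z_j - z_m)` and `η_{αβ}` is `0` for `α+β < n-1`, `1` for
`α+β = n-1`, and the complete homogeneous symmetric polynomial
`m_{α+β-n+1}(z)` for `α+β > n-1` (0-based indices `α, β`). -/
theorem stmt15 (n : ℕ) (hn : 1 ≤ n) (z : Fin n → ℂ) (hz : Function.Injective z) :
    (let D : Matrix (Fin n) (Fin n) ℂ := Matrix.of fun j α => z j ^ (α : ℕ)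
     let χ : Fin n → ℂ := fun j => (∏ m ∈ Finset.univ.erase j, (z j - z m))⁻¹
     let η : Matrix (Fin n) (Fin n) ℂ := Matrix.of fun α β =>
       if (α : ℕ) + (β : ℕ) < n - 1 then 0
       else if (α : ℕ) + (β : ℕ) = n - 1 then 1
       else ∑ μ : Sym (Fin n) ((α : ℕ) + (β : ℕ) - n + 1), (μ.1.map z).prod
     D.transpose * Matrix.diagonal χ * D = η) :=
  stmt15_general n z hz
end
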